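/- arXiv:2209.08607 — 7 statements merged into one kernel-verified Lean document; each statement's English description precedes it below -/
import Mathlib

section
/- Let K be an algebraically closed field of characteristic zero. The image of the polynomial map K² → K² given by (x,y) ↦ (1 + xy, x + y² + xy³) is exactly K² ∖ {(0,0)}. In particular, there is a surjective polynomial map from the affine plane K² onto the punctured affine plane K² ∖ {(0,0)}. -/
/-!
The second coordinate is `x + y² (1 + xy)`, i.e. `x` plus `y²` times the first one. Hence if
both vanish then `x = 0`, and the first coordinate is `1 ≠ 0`. Conversely, for `(a, b)` we take `x = b - a y²`, and the first equation becomes the cubic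
`a y³ - b y + (a - 1) = 0`; it has a root when `a ≠ 0` by algebraic closedness, and the root
`y = -1/b` when `a = 0`, `b ≠ 0`.
-/

namespace PuncturedPlane

open Polynomial

theorem map_ne_zero {R : Type*} [CommRing R] [Nontrivial R] (x y : R) :
    (1 + x * y, x + y ^ 2 + x * y ^ 3) ≠ (0, 0) := by
  rintro h
  obtain ⟨h₁, h₂⟩ := Prod.mk.inj h
  have hx : x = 0 := by linear_combination h₂ - y ^ 2 * h₁
  exact one_ne_zero (by linear_combination h₁ - y * hx : (1 : R) = 0)

theorem map_eq_of_root {R : Type*} [CommRing R] {a b y : R}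
    (hy : a * y ^ 3 - b * y + (a - 1) = 0) :
    (1 + (b - a * y ^ 2) * y, (b - a * y ^ 2) + y ^ 2 + (b - a * y ^ 2) * y ^ 3) = (a, b) :=
  Prod.ext (by linear_combination -hy) (by linear_combination -y ^ 2 * hy)

theorem exists_root_of_ne_zero {K : Type*} [Field K] [IsAlgClosed K] {a b : K}
    (hab : (a, b) ≠ (0, 0)) : ∃ y : K, a * y ^ 3 - b * y + (a - 1) = 0 := by
  by_cases ha : a = 0
  · have hb : b ≠ 0 := fun hb => hab (by rw [ha, hb])
    exact ⟨-b⁻¹, by rw [ha]; field_simp; ring⟩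
  · have hdeg : (C a * X ^ 3 - C b * X + C (a - 1)).degree = 3 := by compute_degree!
    obtain ⟨y, hy⟩ := IsAlgClosed.exists_root (C a * X ^ 3 - C b * X + C (a - 1)) (by
      rw [hdeg]; decide)
    exact ⟨y, by simpa using hy⟩

end PuncturedPlane

theorem stmt_0_general (K : Type*) [Field K] [IsAlgClosed K] :
    Set.range (fun p : K × K => (1 + p.1 * p.2, p.1 + p.2 ^ 2 + p.1 * p.2 ^ 3)) =
      {q : K × K | q ≠ (0, 0)} := by
  ext q
  constructor
  · rintro ⟨⟨x, y⟩, rfl⟩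
    exact PuncturedPlane.map_ne_zero x y
  · obtain ⟨a, b⟩ := q
    intro hab
    obtain ⟨y, hy⟩ := PuncturedPlane.exists_root_of_ne_zero hab
    exact ⟨(b - a * y ^ 2, y), PuncturedPlane.map_eq_of_root hy⟩

/-- The image of the polynomial map `K² → K²`, `(x,y) ↦ (1 + xy, x + y² + xy³)`,
is exactly `K² \ {(0,0)}`. -/
theorem stmt_0 (K : Type*) [Field K] [IsAlgClosed K] [CharZero K] :
    Set.range (fun p : K × K => (1 + p.1 * p.2, p.1 + p.2 ^ 2 + p.1 * p.2 ^ 3)) =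
      {q : K × K | q ≠ (0, 0)} :=
  stmt_0_general K
end

section
/- Let K be an algebraically closed field of characteristic zero. The map K² → ℙ¹(K) sending (x,y) to the point with homogeneous coordinates [1 + xy : x + y² + xy³] is well defined (the two coordinates never vanish simultaneously) and surjective. -/
/-!
The two coordinates satisfy the Bézout identity
`(1 + y³)(1 + xy) - y(x + y² + xy³) = 1`, so they never vanish together. Every point of `ℙ¹`
is `[0 : 1]`, the image of `(-1, 1)`, or `[1 : t]`, the image of `(0, √t)`.
-/

open Projectivization
open scoped LinearAlgebra.Projectivization

namespace Projectivization

variable {K : Type*} [Field K]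

lemma fin_two_eq_mk_zero_one_or_mk_one (q : ℙ K (Fin 2 → K)) :
    q = mk K ![(0 : K), 1] (by simp) ∨ ∃ t : K, q = mk K ![1, t] (by simp) := by
  induction q using Projectivization.ind with
  | h v hv =>
    by_cases h0 : v 0 = 0
    · have h1 : v 1 ≠ 0 := fun h1 => hv (by ext i; fin_cases i <;> simp [h0, h1])
      left
      rw [mk_eq_mk_iff']
      exact ⟨v 1, by ext i; fin_cases i <;> simp [h0]⟩
    · right
      refine ⟨v 1 / v 0, ?_⟩
      rw [mk_eq_mk_iff']
      exact ⟨v 0, by ext i; fin_cases i <;> simp [mul_div_cancel₀ _ h0]⟩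

end Projectivization

section CommRing

variable {R : Type*} [CommRing R]

def quarticCoords (p : R × R) : Fin 2 → R :=
  ![1 + p.1 * p.2, p.1 + p.2 ^ 2 + p.1 * p.2 ^ 3]

lemma quarticCoords_bezout (p : R × R) :
    (1 + p.2 ^ 3) * quarticCoords p 0 - p.2 * quarticCoords p 1 = 1 := by
  simp only [quarticCoords, Matrix.cons_val_zero, Matrix.cons_val_one]
  ring

lemma quarticCoords_ne_zero [Nontrivial R] (p : R × R) : quarticCoords p ≠ 0 := by
  intro hp
  simpa [hp] using quarticCoords_bezout p

end CommRing

lemma surjective_mk_quarticCoords {K : Type*} [Field K] (hsq : ∀ c : K, IsSquare c) :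
    Function.Surjective fun p : K × K => mk K (quarticCoords p) (quarticCoords_ne_zero p) := by
  intro q
  rcases fin_two_eq_mk_zero_one_or_mk_one q with rfl | ⟨t, rfl⟩
  · refine ⟨(-1, 1), (mk_eq_mk_iff' K _ _ _ _).2 ⟨-1, ?_⟩⟩
    ext i; fin_cases i <;> simp [quarticCoords]
  · obtain ⟨y, rfl⟩ := hsq t
    refine ⟨(0, y), (mk_eq_mk_iff' K _ _ _ _).2 ⟨1, ?_⟩⟩
    ext i; fin_cases i <;> simp [quarticCoords, sq]

theorem stmt_2_general (K : Type*) [Field K] [IsAlgClosed K] :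
    ∃ h : ∀ p : K × K,
        (![1 + p.1 * p.2, p.1 + p.2 ^ 2 + p.1 * p.2 ^ 3] : Fin 2 → K) ≠ 0,
      Function.Surjective
        (fun p : K × K => Projectivization.mk K
          (![1 + p.1 * p.2, p.1 + p.2 ^ 2 + p.1 * p.2 ^ 3] : Fin 2 → K) (h p)) :=
  ⟨quarticCoords_ne_zero,
    surjective_mk_quarticCoords fun c => (IsAlgClosed.exists_eq_mul_self c).imp fun _ => id⟩

/-- The map `K² → ℙ¹(K)`, `(x,y) ↦ [1 + xy : x + y² + xy³]`, is well defined and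
surjective. -/
theorem stmt_2 (K : Type*) [Field K] [IsAlgClosed K] [CharZero K] :
    ∃ h : ∀ p : K × K,
        (![1 + p.1 * p.2, p.1 + p.2 ^ 2 + p.1 * p.2 ^ 3] : Fin 2 → K) ≠ 0,
      Function.Surjective
        (fun p : K × K => Projectivization.mk K
          (![1 + p.1 * p.2, p.1 + p.2 ^ 2 + p.1 * p.2 ^ 3] : Fin 2 → K) (h p)) :=
  stmt_2_general K
end

section
/- Let K be an algebraically closed field, let A be a finitely generated commutative K-algebra, let m be a natural number, and let φ : A → K[x₁,…,xₘ] be a K-algebra homomorphism into the polynomial algebra in m variables. Then the following are equivalent: (1) every K-algebra homomorphism A → K factors through φ, i.e., for every K-algebra homomorphism α : A → K there exists a K-algebra homomorphism β : K[x₁,…,xₘ] → K with β ∘ φ = α; (2) for every proper ideal I of A, the ideal of K[x₁,…,xₘ] generated by φ(I) is proper. -/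
/-!
By the Nullstellensatz, the `K`-points `α : A →ₐ[K] K` are exactly the maximal ideals `ker α` of
`A`, and likewise for the polynomial ring. A point `α` factors as `β ∘ φ` precisely when `φ`
carries `ker α` into `ker β`, so a lift of `α` exists iff `ker α` generates a proper ideal, and
every proper ideal sits inside some `ker α`.
-/

theorem Ideal.IsMaximal.exists_algHom_ker_eq (K : Type*) [Field K] [IsAlgClosed K]
    {B : Type*} [CommRing B] [Algebra K B] [Algebra.FiniteType K B]
    {M : Ideal B} (hM : M.IsMaximal) : ∃ α : B →ₐ[K] K, RingHom.ker α = M := by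
  let := Ideal.Quotient.field M
  have : Algebra.FiniteType K (B ⧸ M) := .of_surjective _ (Ideal.Quotient.mkₐ_surjective K M)
  have : Module.Finite K (B ⧸ M) := finite_of_finite_type_of_isJacobsonRing K _
  let α := (IsAlgClosed.lift : B ⧸ M →ₐ[K] K).comp (Ideal.Quotient.mkₐ K M)
  refine ⟨α, (hM.eq_of_le (RingHom.ker_ne_top α) fun x hx => ?_).symm⟩
  simp [α, Ideal.Quotient.eq_zero_iff_mem.2 hx]

theorem AlgHom.comp_eq_iff_map_ker_le_ker {K A B : Type*} [CommRing K] [Ring A] [Ring B]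
    [Algebra K A] [Algebra K B] (φ : A →ₐ[K] B) (α : A →ₐ[K] K) (β : B →ₐ[K] K) :
    β.comp φ = α ↔ Ideal.map φ (RingHom.ker α) ≤ RingHom.ker β := by
  rw [Ideal.map_le_iff_le_comap]
  constructor
  · rintro rfl x hx
    simpa using hx
  · intro h
    ext a
    have hsub : a - algebraMap K A (α a) ∈ RingHom.ker α := by simp
    simpa [sub_eq_zero] using h hsub

/-- For a finitely generated commutative algebra `A` over an algebraically closed field `K`
and a `K`-algebra homomorphism `φ : A → K[x₁,…,xₘ]`, every `K`-point of `A` lifts through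
`φ` iff every proper ideal of `A` generates a proper ideal of the polynomial ring. -/
theorem stmt_3 (K : Type*) [Field K] [IsAlgClosed K]
    (A : Type*) [CommRing A] [Algebra K A] [Algebra.FiniteType K A]
    (m : ℕ) (φ : A →ₐ[K] MvPolynomial (Fin m) K) :
    (∀ α : A →ₐ[K] K, ∃ β : MvPolynomial (Fin m) K →ₐ[K] K, β.comp φ = α) ↔
      (∀ I : Ideal A, I ≠ ⊤ → Ideal.map φ I ≠ ⊤) := by
  constructor
  · intro hlift I hI
    obtain ⟨M, hM, hIM⟩ := Ideal.exists_le_maximal I hI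
    obtain ⟨α, rfl⟩ := hM.exists_algHom_ker_eq K
    obtain ⟨β, hβ⟩ := hlift α
    exact ne_top_of_le_ne_top (RingHom.ker_ne_top β)
      ((Ideal.map_mono hIM).trans ((φ.comp_eq_iff_map_ker_le_ker α β).1 hβ))
  · intro hproper α
    obtain ⟨M, hM, hle⟩ := Ideal.exists_le_maximal _ (hproper _ (RingHom.ker_ne_top α))
    obtain ⟨β, rfl⟩ := hM.exists_algHom_ker_eq K
    exact ⟨β, (φ.comp_eq_iff_map_ker_le_ker α β).2 hle⟩
end

section
/- Let K be an algebraically closed field of characteristic zero, and let φ : K^m → K^n be a polynomial map with image S = φ(K^m) ⊆ K^n. Then for every finite subset F ⊆ S there exists a polynomial map γ : K → K^n whose image contains F and is contained in S. In other words, every image of an affine space under a polynomial map is strongly 𝔸¹-connected. -/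
/-!
Choose finitely many preimages in `K^m` of the points of `F`. Since `K` is infinite, Lagrange
interpolation at distinct nodes gives a polynomial curve `δ : K → K^m` through all of them, and
composing `δ` with the polynomial map yields a polynomial curve in its image that passes
through `F`.
-/

open Polynomial

theorem MvPolynomial.polynomial_eval_aeval {R σ : Type*} [CommSemiring R] (δ : σ → R[X])
    (p : MvPolynomial σ R) (t : R) :
    (aeval δ p).eval t = eval (fun i => (δ i).eval t) p := by
  rw [← coe_aeval_eq_eval, ← Polynomial.coe_aeval_eq_eval]
  exact comp_aeval_apply _ _ _

theorem exists_polynomial_curve_through_of_finite {K σ : Type*} [Field K] [Infinite K]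
    {G : Set (σ → K)} (hG : G.Finite) :
    ∃ δ : σ → K[X], G ⊆ Set.range fun t i => (δ i).eval t := by
  classical
  have := hG.fintype
  let node : G ↪ K :=
    (Fintype.equivFin G).toEmbedding.trans (Fin.valEmbedding.trans (Infinite.natEmbedding K))
  refine ⟨fun i => Lagrange.interpolate Finset.univ node fun x => x.1 i, fun x hx => ?_⟩
  exact ⟨node ⟨x, hx⟩, funext fun i =>
    Lagrange.eval_interpolate_at_node _ node.injective.injOn (Finset.mem_univ _)⟩

theorem range_polynomial_curve_aeval {R σ ι : Type*} [CommSemiring R] (δ : σ → R[X])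
    (f : ι → MvPolynomial σ R) :
    (Set.range fun t j => (MvPolynomial.aeval δ (f j)).eval t) =
      (fun v j => MvPolynomial.eval v (f j)) '' Set.range fun t i => (δ i).eval t := by
  simp only [MvPolynomial.polynomial_eval_aeval, ← Set.range_comp]
  rfl

theorem stmt_6_general (K : Type*) [Field K] [CharZero K] (m n : ℕ)
    (f : Fin n → MvPolynomial (Fin m) K)
    (F : Set (Fin n → K)) (hFfin : F.Finite)
    (hFS : F ⊆ Set.range (fun v : Fin m → K => fun j : Fin n => MvPolynomial.eval v (f j))) :
    ∃ γ : Fin n → Polynomial K,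
      F ⊆ Set.range (fun t : K => fun j : Fin n => (γ j).eval t) ∧
      Set.range (fun t : K => fun j : Fin n => (γ j).eval t) ⊆
        Set.range (fun v : Fin m → K => fun j : Fin n => MvPolynomial.eval v (f j)) := by
  obtain ⟨G, -, hGfin, hGF⟩ := Set.exists_subset_image_finite_and.mp
    ⟨F, by rwa [Set.image_univ], hFfin, rfl⟩
  obtain ⟨δ, hδ⟩ := exists_polynomial_curve_through_of_finite hGfin
  refine ⟨fun j => MvPolynomial.aeval δ (f j), ?_, ?_⟩ <;> rw [range_polynomial_curve_aeval]
  · exact hGF ▸ Set.image_mono hδ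
  · exact Set.image_subset_range _ _

/-- The image of a polynomial map `K^m → K^n` is strongly `𝔸¹`-connected: every finite
subset of the image is contained in the image of a polynomial map `K → K^n` whose image
lies in the image of the original map. -/
theorem stmt_6 (K : Type*) [Field K] [IsAlgClosed K] [CharZero K] (m n : ℕ)
    (f : Fin n → MvPolynomial (Fin m) K)
    (F : Set (Fin n → K)) (hFfin : F.Finite)
    (hFS : F ⊆ Set.range (fun v : Fin m → K => fun j : Fin n => MvPolynomial.eval v (f j))) :
    ∃ γ : Fin n → Polynomial K,
      F ⊆ Set.range (fun t : K => fun j : Fin n => (γ j).eval t) ∧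
      Set.range (fun t : K => fun j : Fin n => (γ j).eval t) ⊆
        Set.range (fun v : Fin m → K => fun j : Fin n => MvPolynomial.eval v (f j)) :=
  stmt_6_general K m n f F hFfin hFS
end

section
/- Let K be a field of characteristic zero and let k ≥ 1 be an integer. Consider the map ψ⁺ : K² → K³ given by ψ⁺(t,s) = (t^k·s − 1, t, (t^k·s − 2)·s). Then ψ⁺ is injective, and its image is exactly the set {(a,b,c) ∈ K³ : a² − b^k·c = 1 and ¬(a = 1 ∧ b = 0)}. In other words, the complement in the surface X = {(a,b,c) ∈ K³ : a² − b^k·c = 1} of the curve {a = 1, b = 0} is the bijective polynomial image of the affine plane K². -/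
/-!
Off the line `t = 0` the map is inverted by `t = b`, `s = (a + 1) / b ^ k`. On `b = 0` the
surface equation reduces to `a ^ 2 = 1`; since `k ≥ 1` the map sends `t = 0` to `a = -1`, and
there `c = -2 s` recovers `s` because `2 ≠ 0`. The curve `{a = 1, b = 0}` is exactly what is missed.
-/

namespace PsiPlus

variable {K : Type*} [Field K]

def psiPlus (k : ℕ) (p : K × K) : K × K × K :=
  (p.1 ^ k * p.2 - 1, p.1, (p.1 ^ k * p.2 - 2) * p.2)

def surfaceMinusCurve (k : ℕ) : Set (K × K × K) :=
  {q | q.1 ^ 2 - q.2.1 ^ k * q.2.2 = 1 ∧ ¬(q.1 = 1 ∧ q.2.1 = 0)}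

theorem psiPlus_injective (h2 : (2 : K) ≠ 0) (k : ℕ) :
    Function.Injective (psiPlus (K := K) k) := by
  rintro ⟨t, s⟩ ⟨t', s'⟩ h
  simp only [psiPlus, Prod.mk.injEq] at h
  obtain ⟨h1, rfl, h3⟩ := h
  refine Prod.ext rfl ?_
  by_cases ht : t ^ k = 0
  · rw [ht] at h3
    exact mul_left_cancel₀ (neg_ne_zero.mpr h2) (by linear_combination h3)
  · exact mul_left_cancel₀ ht (by linear_combination h1)

theorem psiPlus_mem_surfaceMinusCurve (h2 : (2 : K) ≠ 0) {k : ℕ} (hk : k ≠ 0) (p : K × K) :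
    psiPlus k p ∈ surfaceMinusCurve k := by
  obtain ⟨t, s⟩ := p
  refine ⟨by simp only [psiPlus]; ring, ?_⟩
  rintro ⟨ha, rfl : t = 0⟩
  simp only [psiPlus, zero_pow hk, zero_mul] at ha
  exact h2 (by linear_combination -ha)

theorem exists_psiPlus_eq (h2 : (2 : K) ≠ 0) {k : ℕ} (hk : k ≠ 0) {q : K × K × K}
    (hq : q ∈ surfaceMinusCurve k) : ∃ p, psiPlus k p = q := by
  obtain ⟨a, b, c⟩ := q
  obtain ⟨heq, hne⟩ := hq
  by_cases hb : b = 0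
  · subst hb
    rw [zero_pow hk, zero_mul, sub_zero, sq_eq_one_iff] at heq
    have ha : a = -1 := heq.resolve_left fun ha => hne ⟨ha, rfl⟩
    refine ⟨(0, -c / 2), ?_⟩
    simp only [psiPlus, zero_pow hk, ha, Prod.mk.injEq]
    refine ⟨by ring, trivial, ?_⟩
    field_simp
    ring
  · have hbk : b ^ k ≠ 0 := pow_ne_zero k hb
    refine ⟨(b, (a + 1) / b ^ k), ?_⟩
    simp only [psiPlus, Prod.mk.injEq]
    refine ⟨by field_simp; ring, trivial, ?_⟩
    field_simp
    linear_combination heq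

theorem range_psiPlus (h2 : (2 : K) ≠ 0) {k : ℕ} (hk : k ≠ 0) :
    Set.range (psiPlus (K := K) k) = surfaceMinusCurve k :=
  Set.ext fun _ => ⟨by rintro ⟨p, rfl⟩; exact psiPlus_mem_surfaceMinusCurve h2 hk p,
    exists_psiPlus_eq h2 hk⟩

end PsiPlus

open PsiPlus in
/-- The map `ψ⁺(t,s) = (t^k·s − 1, t, (t^k·s − 2)·s)` is injective with image exactly the
complement in the surface `{a² − b^k·c = 1}` of the curve `{a = 1, b = 0}`. -/
theorem stmt_7 (K : Type*) [Field K] [CharZero K] (k : ℕ) (hk : 1 ≤ k) :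
    Function.Injective
      (fun p : K × K => (p.1 ^ k * p.2 - 1, p.1, (p.1 ^ k * p.2 - 2) * p.2)) ∧
    Set.range (fun p : K × K => (p.1 ^ k * p.2 - 1, p.1, (p.1 ^ k * p.2 - 2) * p.2)) =
      {q : K × K × K | q.1 ^ 2 - q.2.1 ^ k * q.2.2 = 1 ∧ ¬(q.1 = 1 ∧ q.2.1 = 0)} :=
  ⟨psiPlus_injective two_ne_zero k, range_psiPlus two_ne_zero (Nat.one_le_iff_ne_zero.mp hk)⟩
end

section
/- Let K be a field of characteristic zero and let k ≥ 1 be an integer. Consider the maps ψ⁺, ψ⁻ : K² → K³ given by ψ⁺(t,s) = (t^k·s − 1, t, (t^k·s − 2)·s) and ψ⁻(t,s) = (t^k·s + 1, t, (t^k·s + 2)·s). Then both ψ⁺ and ψ⁻ are injective, both of their images are contained in the surface X = {(a,b,c) ∈ K³ : a² − b^k·c = 1}, and the union of their images equals X. In other words, the surface X is covered by two subsets, each of which is a bijective polynomial image of the affine plane K². -/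
/-!
Write `u = t^k s`. The map `ψ_c(t,s) = (u + c, t, (u + 2c)s)` lands on `a² − b^k c' = c²`, since
`(u + c)² − u(u + 2c) = c²`, and `ψ⁻ = ψ_1`, `ψ⁺ = ψ_{-1}`. It is injective because `t` is read off
directly and then `s` from `u` if `t^k ≠ 0`, and from the third coordinate `2cs` if `t^k = 0`.
A point `(a, b, c')` of the surface with `b^k ≠ 0` is `ψ_c(b, (a − c)/b^k)`; if `b^k = 0` then
`a = ±c` and the point is `ψ_{±c}(b, ±c'/(2c))`.
-/

section

variable {K : Type*}

def psi [CommRing K] (k : ℕ) (c : K) (p : K × K) : K × K × K :=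
  (p.1 ^ k * p.2 + c, p.1, (p.1 ^ k * p.2 + 2 * c) * p.2)

def surface [CommRing K] (k : ℕ) (d : K) : Set (K × K × K) :=
  {q | q.1 ^ 2 - q.2.1 ^ k * q.2.2 = d}

theorem psi_injective [CommRing K] [IsDomain K] (k : ℕ) {c : K} (hc : 2 * c ≠ 0) :
    Function.Injective (psi k c) := by
  rintro ⟨t, s⟩ ⟨t', s'⟩ h
  simp only [psi, Prod.mk.injEq] at h
  obtain ⟨h₁, rfl, h₃⟩ := h
  rcases eq_or_ne (t ^ k) 0 with ht | ht
  · simp only [ht, zero_mul, zero_add] at h₃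
    rw [mul_left_cancel₀ hc h₃]
  · rw [mul_left_cancel₀ ht (add_right_cancel h₁)]

theorem range_psi_subset [CommRing K] (k : ℕ) (c : K) : Set.range (psi k c) ⊆ surface k (c ^ 2) := by
  rintro _ ⟨p, rfl⟩
  simp only [surface, psi, Set.mem_ofPred_eq]
  ring

theorem mem_range_psi_of_pow_ne_zero [Field K] {k : ℕ} {c : K} {q : K × K × K}
    (hq : q ∈ surface k (c ^ 2)) (hb : q.2.1 ^ k ≠ 0) : q ∈ Set.range (psi k c) := by
  obtain ⟨a, b, d⟩ := q
  refine ⟨(b, (a - c) / b ^ k), ?_⟩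
  simp only [surface, Set.mem_ofPred_eq] at hq hb
  simp only [psi, Prod.mk.injEq, true_and]
  constructor
  · field_simp
    ring
  · field_simp
    linear_combination hq

theorem mem_range_psi_of_pow_eq_zero [Field K] {k : ℕ} {c : K} (hc : 2 * c ≠ 0) {q : K × K × K}
    (hq : q ∈ surface k (c ^ 2)) (hb : q.2.1 ^ k = 0) :
    q ∈ Set.range (psi k (-c)) ∪ Set.range (psi k c) := by
  obtain ⟨a, b, d⟩ := q
  simp only [surface, Set.mem_ofPred_eq] at hq hb
  rw [hb, zero_mul, sub_zero, sq_eq_sq_iff_eq_or_eq_neg] at hq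
  rcases hq with rfl | rfl
  · refine Or.inr ⟨(b, d / (2 * a)), ?_⟩
    simp only [psi, hb, zero_mul, zero_add, mul_div_cancel₀ d hc]
  · have hc' : 2 * -c ≠ 0 := by rwa [mul_neg, neg_ne_zero]
    refine Or.inl ⟨(b, d / (2 * -c)), ?_⟩
    simp only [psi, hb, zero_mul, zero_add, mul_div_cancel₀ d hc']

theorem range_psi_union_range_psi [Field K] (k : ℕ) {c : K} (hc : 2 * c ≠ 0) :
    Set.range (psi k (-c)) ∪ Set.range (psi k c) = surface k (c ^ 2) := by
  refine Set.Subset.antisymm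
    (Set.union_subset (neg_sq c ▸ range_psi_subset k (-c)) (range_psi_subset k c)) fun q hq => ?_
  by_cases hb : q.2.1 ^ k = 0
  · exact mem_range_psi_of_pow_eq_zero hc hq hb
  · exact Or.inr (mem_range_psi_of_pow_ne_zero hq hb)

end

theorem stmt_8_general (K : Type*) [Field K] [CharZero K] (k : ℕ) :
    Function.Injective
      (fun p : K × K => (p.1 ^ k * p.2 - 1, p.1, (p.1 ^ k * p.2 - 2) * p.2)) ∧
    Function.Injective
      (fun p : K × K => (p.1 ^ k * p.2 + 1, p.1, (p.1 ^ k * p.2 + 2) * p.2)) ∧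
    Set.range (fun p : K × K => (p.1 ^ k * p.2 - 1, p.1, (p.1 ^ k * p.2 - 2) * p.2)) ⊆
      {q : K × K × K | q.1 ^ 2 - q.2.1 ^ k * q.2.2 = 1} ∧
    Set.range (fun p : K × K => (p.1 ^ k * p.2 + 1, p.1, (p.1 ^ k * p.2 + 2) * p.2)) ⊆
      {q : K × K × K | q.1 ^ 2 - q.2.1 ^ k * q.2.2 = 1} ∧
    Set.range (fun p : K × K => (p.1 ^ k * p.2 - 1, p.1, (p.1 ^ k * p.2 - 2) * p.2)) ∪
      Set.range (fun p : K × K => (p.1 ^ k * p.2 + 1, p.1, (p.1 ^ k * p.2 + 2) * p.2)) =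
        {q : K × K × K | q.1 ^ 2 - q.2.1 ^ k * q.2.2 = 1} := by
  have hminus : (fun p : K × K => (p.1 ^ k * p.2 - 1, p.1, (p.1 ^ k * p.2 - 2) * p.2)) =
      psi k (-1) := by
    funext p
    simp only [psi, Prod.mk.injEq, true_and]
    constructor <;> ring
  have hplus : (fun p : K × K => (p.1 ^ k * p.2 + 1, p.1, (p.1 ^ k * p.2 + 2) * p.2)) =
      psi k 1 := by
    funext p
    simp only [psi, mul_one]
  have h2 : (2 : K) * 1 ≠ 0 := by norm_num
  have hcover := range_psi_union_range_psi k h2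
  rw [one_pow] at hcover
  obtain ⟨hsub_minus, hsub_plus⟩ := Set.union_subset_iff.mp hcover.le
  rw [hminus, hplus]
  exact ⟨psi_injective k (by norm_num), psi_injective k h2, hsub_minus, hsub_plus, hcover⟩

/-- The maps `ψ⁺(t,s) = (t^k·s − 1, t, (t^k·s − 2)·s)` and
`ψ⁻(t,s) = (t^k·s + 1, t, (t^k·s + 2)·s)` are injective, their images lie in the surface
`X = {a² − b^k·c = 1}`, and the union of their images is all of `X`. -/
theorem stmt_8 (K : Type*) [Field K] [CharZero K] (k : ℕ) (hk : 1 ≤ k) :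
    Function.Injective
      (fun p : K × K => (p.1 ^ k * p.2 - 1, p.1, (p.1 ^ k * p.2 - 2) * p.2)) ∧
    Function.Injective
      (fun p : K × K => (p.1 ^ k * p.2 + 1, p.1, (p.1 ^ k * p.2 + 2) * p.2)) ∧
    Set.range (fun p : K × K => (p.1 ^ k * p.2 - 1, p.1, (p.1 ^ k * p.2 - 2) * p.2)) ⊆
      {q : K × K × K | q.1 ^ 2 - q.2.1 ^ k * q.2.2 = 1} ∧
    Set.range (fun p : K × K => (p.1 ^ k * p.2 + 1, p.1, (p.1 ^ k * p.2 + 2) * p.2)) ⊆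
      {q : K × K × K | q.1 ^ 2 - q.2.1 ^ k * q.2.2 = 1} ∧
    Set.range (fun p : K × K => (p.1 ^ k * p.2 - 1, p.1, (p.1 ^ k * p.2 - 2) * p.2)) ∪
      Set.range (fun p : K × K => (p.1 ^ k * p.2 + 1, p.1, (p.1 ^ k * p.2 + 2) * p.2)) =
        {q : K × K × K | q.1 ^ 2 - q.2.1 ^ k * q.2.2 = 1} :=
  stmt_8_general K k
end

section
/- Let K be an algebraically closed field of characteristic zero and let n ≥ 2 be an integer. Then there exist a natural number m and a polynomial map φ : K^m → K^n whose image is exactly K^n ∖ {0}, the complement of the origin. -/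
/-!
Write a point of `K^(k+1)` as `(p, y)` with `p ∈ K`, `y ∈ K^k`, and consider
`(x, c, d) ↦ (P, x + P • d)` with `P = 1 + c ⬝ᵥ x`. Its values avoid the origin: `P = 0` and
`x + P • d = 0` force `x = 0` and then `P = 1`. Conversely, `(p, y)` with `y ≠ 0` is hit by `x = y`,
`d = 0` and any `c` with `c ⬝ᵥ y = p - 1`; and `(p, 0)` with `p ≠ 0` by `x = 1`, `d = -p⁻¹ • 1`
and `c ⬝ᵥ 1 = p - 1`.
-/

open MvPolynomial Matrix

section PolyMap

variable {R σ τ ι : Type*} [CommSemiring R]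

noncomputable def polyMap (f : ι → MvPolynomial σ R) (v : σ → R) : ι → R :=
  fun j => eval v (f j)

theorem range_polyMap_rename (e : σ ≃ τ) (f : ι → MvPolynomial σ R) :
    Set.range (polyMap fun j => rename e (f j)) = Set.range (polyMap f) := by
  have hcomp : (polyMap fun j => rename e (f j)) = polyMap f ∘ (· ∘ e) := by
    funext v j
    exact eval_rename e v (f j)
  rw [hcomp]
  exact Function.Surjective.range_comp (fun u => ⟨u ∘ e.symm, by ext; simp⟩) _

theorem exists_range_polyMap_fin_eq [Finite σ] (f : ι → MvPolynomial σ R) :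
    ∃ (m : ℕ) (g : ι → MvPolynomial (Fin m) R), Set.range (polyMap g) = Set.range (polyMap f) :=
  let ⟨m, ⟨e⟩⟩ := Finite.exists_equiv_fin σ
  ⟨m, _, range_polyMap_rename e f⟩

end PolyMap

theorem fin_cons_eq_zero_iff {M : Type*} [Zero M] {n : ℕ} {a : M} {y : Fin n → M} :
    (Fin.cons a y : Fin (n + 1) → M) = 0 ↔ (a, y) = 0 :=
  cons_eq_zero_iff.trans Prod.mk_eq_zero.symm

section PuncturedParam

variable {K ι : Type*} [Field K] [Fintype ι]

def puncturedParam (x c d : ι → K) : K × (ι → K) :=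
  (1 + c ⬝ᵥ x, x + (1 + c ⬝ᵥ x) • d)

theorem exists_dotProduct_eq {x : ι → K} (hx : x ≠ 0) (a : K) : ∃ c, c ⬝ᵥ x = a := by
  classical
  obtain ⟨i, hi⟩ := Function.ne_iff.mp hx
  exact ⟨Pi.single i (a / x i), by rw [single_dotProduct, div_mul_cancel₀ _ hi]⟩

theorem puncturedParam_ne_zero (x c d : ι → K) : puncturedParam x c d ≠ 0 := by
  intro h
  have hP : 1 + c ⬝ᵥ x = 0 := congrArg Prod.fst h
  have hx : x = 0 := by simpa [puncturedParam, hP] using congrArg Prod.snd h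
  simp [hx] at hP

theorem exists_puncturedParam_eq [Nonempty ι] {p : K} {y : ι → K} (h : (p, y) ≠ 0) :
    ∃ x c d, puncturedParam x c d = (p, y) := by
  by_cases hy : y = 0
  · have hp : p ≠ 0 := by
      rintro rfl
      exact h (by simp [hy])
    obtain ⟨c, hc⟩ := exists_dotProduct_eq (one_ne_zero : (1 : ι → K) ≠ 0) (p - 1)
    exact ⟨1, c, -p⁻¹ • 1, by simp [puncturedParam, hc, hy, smul_smul, hp]⟩
  · obtain ⟨c, hc⟩ := exists_dotProduct_eq hy (p - 1)
    exact ⟨y, c, 0, by simp [puncturedParam, hc]⟩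

end PuncturedParam

section PuncturedPolys

variable (K : Type*) [Field K] (k : ℕ)

noncomputable def puncturedPolys : Fin (k + 1) → MvPolynomial (Fin k ⊕ Fin k ⊕ Fin k) K :=
  let x i := X (Sum.inl i)
  let c i := X (Sum.inr (Sum.inl i))
  let d i := X (Sum.inr (Sum.inr i))
  let P := 1 + ∑ i, c i * x i
  Fin.cons P fun i => x i + P * d i

variable {K k}

theorem polyMap_puncturedPolys (x c d : Fin k → K) :
    polyMap (puncturedPolys K k) (Sum.elim x (Sum.elim c d)) =
      Fin.cons (puncturedParam x c d).1 (puncturedParam x c d).2 := by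
  funext j
  refine Fin.cases ?_ (fun i => ?_) j <;>
    simp [polyMap, puncturedPolys, puncturedParam, dotProduct]

variable (K k)

theorem range_polyMap_puncturedPolys [NeZero k] :
    Set.range (polyMap (puncturedPolys K k)) = {w | w ≠ 0} := by
  ext w
  constructor
  · rintro ⟨v, rfl⟩
    rw [← Sum.elim_comp_inl_inr v, ← Sum.elim_comp_inl_inr (v ∘ Sum.inr), polyMap_puncturedPolys]
    exact fun h => puncturedParam_ne_zero _ _ _ (fin_cons_eq_zero_iff.mp h)
  · intro hw
    have hne : (w 0, Fin.tail w) ≠ 0 := by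
      rwa [Ne, ← fin_cons_eq_zero_iff, Fin.cons_self_tail]
    obtain ⟨x, c, d, h⟩ := exists_puncturedParam_eq hne
    exact ⟨Sum.elim x (Sum.elim c d), by rw [polyMap_puncturedPolys, h, Fin.cons_self_tail]⟩

end PuncturedPolys

theorem stmt_9_general (K : Type*) [Field K] (n : ℕ) (hn : 2 ≤ n) :
    ∃ (m : ℕ) (f : Fin n → MvPolynomial (Fin m) K),
      Set.range (fun v : Fin m → K => fun j : Fin n => MvPolynomial.eval v (f j)) =
        {w : Fin n → K | w ≠ 0} := by
  obtain ⟨k, rfl⟩ : ∃ k, n = k + 1 + 1 := ⟨n - 2, by omega⟩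
  obtain ⟨m, f, hf⟩ := exists_range_polyMap_fin_eq (puncturedPolys K (k + 1))
  exact ⟨m, f, hf.trans (range_polyMap_puncturedPolys K (k + 1))⟩

/-- For `n ≥ 2` there is a polynomial map `K^m → K^n` whose image is exactly the
complement of the origin. -/
theorem stmt_9 (K : Type*) [Field K] [IsAlgClosed K] [CharZero K] (n : ℕ) (hn : 2 ≤ n) :
    ∃ (m : ℕ) (f : Fin n → MvPolynomial (Fin m) K),
      Set.range (fun v : Fin m → K => fun j : Fin n => MvPolynomial.eval v (f j)) =
        {w : Fin n → K | w ≠ 0} :=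
  stmt_9_general K n hn
end
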